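/- arXiv:1609.01908 — 3 statements merged into one kernel-verified Lean document; each statement's English description precedes it below -/
import Mathlib

section
/- Let T ∈ G(n,d) be (the orthogonal projection matrix onto) a d-plane in ℝ^n and let L ∈ ℝ^n⊗ℝ^n. For small t, let T(t) ∈ G(n,d) denote the orthogonal projection onto the d-plane (Id + tL)(T). Then t ↦ T(t) is differentiable at 0 with T'(0) = T^⊥∘L∘T + (T^⊥∘L∘T)^*, and T'(0) belongs to the tangent space of G(n,d) at T. -/
open MeasureTheory Filter Metric Set Topology ENNReal ProbabilityTheory
open scoped Matrix
open scoped RealInnerProductSpace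

noncomputable section

attribute [local instance] Matrix.normedAddCommGroup Matrix.normedSpace

/-- Euclidean space `ℝⁿ`. -/
abbrev E (n : ℕ) := EuclideanSpace ℝ (Fin n)

/-- Square `n × n` real matrices, `ℝⁿ ⊗ ℝⁿ`. -/
abbrev Mat (n : ℕ) := Matrix (Fin n) (Fin n) ℝ

instance matMeasurableSpace {n : ℕ} : MeasurableSpace (Mat n) :=
  inferInstanceAs (MeasurableSpace (Fin n → Fin n → ℝ))

instance matBorelSpace {n : ℕ} : BorelSpace (Mat n) :=
  inferInstanceAs (BorelSpace (Fin n → Fin n → ℝ))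

/-- The Grassmannian `G(n,d)`, identified with the set of orthogonal projection
matrices of rank `d`: symmetric idempotent `n × n` matrices of trace `d`. -/
def grassSet (n d : ℕ) : Set (Mat n) :=
  {T | T * T = T ∧ Tᵀ = T ∧ T.trace = (d : ℝ)}

/-- Inner (Hilbert-Schmidt) product of matrices, `A : B = tr (Aᵀ B)`. -/
def mdot {n : ℕ} (A B : Mat n) : ℝ := (Aᵀ * B).trace

/-- Action of a matrix on a vector of `ℝⁿ`. -/
def matVec {n : ℕ} (A : Mat n) (v : E n) : E n := Matrix.toEuclideanLin A v

/-- The `d`-plane (set of fixed points) associated to a projection matrix `T`. -/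
def planeSet {n : ℕ} (T : Mat n) : Set (E n) := {y | matVec T y = y}

/-- The matrix `B_F(x,T)` associated to an integrand `F`, defined by
`B_F(x,T) : L = F(x,T) (T : L) + ⟨d_T F(x,T), T^⊥ L T + (T^⊥ L T)ᵀ⟩`. -/
def BF {n : ℕ} (F : E n → Mat n → ℝ) (x : E n) (T : Mat n) : Mat n :=
  Matrix.of fun i j =>
    F x T * T i j +
      fderiv ℝ (F x) T
        ((1 - T) * Matrix.single i j (1 : ℝ) * T +
          ((1 - T) * Matrix.single i j (1 : ℝ) * T)ᵀ)

/-- The matrix `Dg(x)` of the differential of a vector field `g`. -/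
def gradMat {n : ℕ} (g : E n → E n) (x : E n) : Mat n :=
  Matrix.of fun i j => fderiv ℝ g x (EuclideanSpace.single j (1 : ℝ)) i

/-- The anisotropic first variation
`δ_F V (g) = ∫ [⟨d_x F(x,T), g x⟩ + B_F(x,T) : Dg(x)] dV(x,T)`. -/
def firstVar {n : ℕ} (F : E n → Mat n → ℝ) (V : Measure (E n × Mat n))
    (g : E n → E n) : ℝ :=
  ∫ p, (fderiv ℝ (fun y => F y p.2) p.1 (g p.1) +
    mdot (BF F p.1 p.2) (gradMat g p.1)) ∂V

/-- `F` is a `C¹` integrand on `Ω × G(n,d)` (via an ambient extension in the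
Grassmannian variable). -/
def IsC1 {n : ℕ} (F : E n → Mat n → ℝ) (Ω : Set (E n)) : Prop :=
  ContDiffOn ℝ 1 (fun p : E n × Mat n => F p.1 p.2) (Ω ×ˢ univ)

/-- Test vector fields: `g ∈ C¹_c(Ω, ℝⁿ)`. -/
def TestVF {n : ℕ} (Ω : Set (E n)) (g : E n → E n) : Prop :=
  ContDiff ℝ 1 g ∧ HasCompactSupport g ∧ tsupport g ⊆ Ω

/-- Sup norm of a vector field. -/
def supNorm {n : ℕ} (g : E n → E n) : ℝ := ⨆ x, ‖g x‖

/-- `δ_F V` is a Radon measure on the open set `Ω`, i.e. `V` has locally bounded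
anisotropic first variation: for every compact `K ⊆ Ω` there is `C` with
`|δ_F V (g)| ≤ C ‖g‖_∞` whenever `spt g ⊆ K`. -/
def HasBoundedFV {n : ℕ} (F : E n → Mat n → ℝ) (V : Measure (E n × Mat n))
    (Ω : Set (E n)) : Prop :=
  ∀ K : Set (E n), IsCompact K → K ⊆ Ω →
    ∃ C : ℝ, ∀ g : E n → E n, TestVF Ω g → tsupport g ⊆ K →
      |firstVar F V g| ≤ C * supNorm g

/-- `A_x(μ) = ∫ B_F(x,T) dμ(T)`. -/
def Ax {n : ℕ} (F : E n → Mat n → ℝ) (x : E n) (μ : Measure (Mat n)) : Mat n :=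
  ∫ T, BF F x T ∂μ

/-- Dimension of the kernel of (the linear map associated to) a matrix. -/
def kerDim {n : ℕ} (A : Mat n) : ℕ :=
  Module.finrank ℝ (LinearMap.ker (Matrix.toEuclideanLin A))

/-- The atomic condition (AC) for `F` at the point `x`:
(i) `dim Ker A_x(μ) ≤ n − d` for every probability measure `μ` on `G(n,d)`;
(ii) if `dim Ker A_x(μ) = n − d` then `μ` is a Dirac delta. -/
def AtomicCondition (n d : ℕ) (F : E n → Mat n → ℝ) (x : E n) : Prop :=
  ∀ μ : Measure (Mat n), IsProbabilityMeasure μ → μ (grassSet n d) = 1 →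
    kerDim (Ax F x μ) ≤ n - d ∧
      (kerDim (Ax F x μ) = n - d → ∃ T₀ ∈ grassSet n d, μ = Measure.dirac T₀)

/-- `ω_d`, the volume of the unit ball of `ℝ^d`. -/
def omegaBall (d : ℕ) : ℝ := (volume (ball (0 : E d) 1)).toReal

/-- The `d`-dimensional Hausdorff measure `ℋ^d` on `ℝⁿ`, with the standard
normalization (so that it agrees with Lebesgue measure on `d`-planes). -/
def hausdorff (n d : ℕ) : Measure (E n) :=
  ENNReal.ofReal (omegaBall d / 2 ^ d) • μH[(d : ℝ)]

/-- Lower `d`-dimensional density `Θ^d_*(x,μ)`. -/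
def lowerDensity {n : ℕ} (d : ℕ) (μ : Measure (E n)) (x : E n) : ℝ≥0∞ :=
  liminf (fun r : ℝ => μ (ball x r) / ENNReal.ofReal (omegaBall d * r ^ d)) (𝓝[>] 0)

/-- Upper `d`-dimensional density `Θ^{d*}(x,μ)`. -/
def upperDensity {n : ℕ} (d : ℕ) (μ : Measure (E n)) (x : E n) : ℝ≥0∞ :=
  limsup (fun r : ℝ => μ (ball x r) / ENNReal.ofReal (omegaBall d * r ^ d)) (𝓝[>] 0)

/-- The set of points of positive lower `d`-dimensional density. -/
def posDens {n : ℕ} (d : ℕ) (μ : Measure (E n)) : Set (E n) :=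
  {x | 0 < lowerDensity d μ x}

/-- The rescaled measure `μ_{x,r} = (η^{x,r}_# μ) ⌊ B₁ / μ(B_r(x))`. -/
def scaledMeasure {n : ℕ} (μ : Measure (E n)) (x : E n) (r : ℝ) : Measure (E n) :=
  (μ (ball x r))⁻¹ • ((μ.map fun y => r⁻¹ • (y - x)).restrict (ball 0 1))

/-- Weak-* convergence of a sequence of measures (tested on `C_c`). -/
def WeakStar {α : Type*} [TopologicalSpace α] [MeasurableSpace α]
    (μs : ℕ → Measure α) (σ : Measure α) : Prop :=
  ∀ f : α → ℝ, Continuous f → HasCompactSupport f →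
    Tendsto (fun j => ∫ y, f y ∂(μs j)) atTop (𝓝 (∫ y, f y ∂σ))

/-- `σ ∈ Tan(x,μ)`: tangent measures in the sense of Preiss. -/
def TangentMeasure {n : ℕ} (μ : Measure (E n)) (x : E n) (σ : Measure (E n)) : Prop :=
  ∃ r : ℕ → ℝ, (∀ j, 0 < r j) ∧ Tendsto r atTop (𝓝 0) ∧
    WeakStar (fun j => scaledMeasure μ x (r j)) σ

/-- The rescaled varifold `V_{x,r}`. -/
def scaledVarifold {n : ℕ} (V : Measure (E n × Mat n)) (x : E n) (r : ℝ) :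
    Measure (E n × Mat n) :=
  (V (ball x r ×ˢ (univ : Set (Mat n))))⁻¹ •
    ((V.map fun p => (r⁻¹ • (p.1 - x), p.2)).restrict (ball 0 1 ×ˢ univ))

/-- `W ∈ Tan(x,V)`: tangent varifolds. -/
def TangentVarifold {n : ℕ} (V : Measure (E n × Mat n)) (x : E n)
    (W : Measure (E n × Mat n)) : Prop :=
  ∃ r : ℕ → ℝ, (∀ j, 0 < r j) ∧ Tendsto r atTop (𝓝 0) ∧
    WeakStar (fun j => scaledVarifold V x (r j)) W

/-- A set `K ⊆ ℝⁿ` is `d`-rectifiable: up to an `ℋ^d`-null set it is covered by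
countably many `C¹` images of `ℝ^d`. -/
def IsRectifiableSet (n d : ℕ) (K : Set (E n)) : Prop :=
  ∃ f : ℕ → (E d → E n), (∀ j, ContDiff ℝ 1 (f j)) ∧
    hausdorff n d (K \ ⋃ j, range (f j)) = 0

/-- `T` is the approximate tangent plane of the `d`-rectifiable set `K` at `x`:
the blow-ups of `ℋ^d ⌊ K` at `x` converge weakly-* to `ℋ^d ⌊ T`. -/
def IsApproxTangentAt (n d : ℕ) (K : Set (E n)) (x : E n) (T : Mat n) : Prop :=
  ∀ f : E n → ℝ, Continuous f → HasCompactSupport f →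
    Tendsto (fun r : ℝ => (∫ y, f (r⁻¹ • (y - x)) ∂((hausdorff n d).restrict K)) / r ^ d)
      (𝓝[>] 0) (𝓝 (∫ y in planeSet T, f y ∂(hausdorff n d)))

/-- A `d`-varifold is `d`-rectifiable if it is of the form
`θ ℋ^d ⌊ K ⊗ δ_{T_x K}` for a `d`-rectifiable set `K` and a positive Borel
function `θ`. -/
def IsRectifiableVarifold (n d : ℕ) (V : Measure (E n × Mat n)) : Prop :=
  ∃ (K : Set (E n)) (θ : E n → ℝ≥0∞) (τ : E n → Mat n),
    IsRectifiableSet n d K ∧ Measurable θ ∧ Measurable τ ∧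
    (∀ x ∈ K, 0 < θ x ∧ θ x ≠ ⊤) ∧ (∀ x, τ x ∈ grassSet n d) ∧
    (∀ᵐ x ∂((hausdorff n d).restrict K), IsApproxTangentAt n d K x (τ x)) ∧
    V = Measure.map (fun x => (x, τ x)) (((hausdorff n d).restrict K).withDensity θ)


/-- The orthogonal projection matrix onto a subspace `W ⊆ ℝⁿ`. -/
def projMat {n : ℕ} (W : Submodule ℝ (E n)) : Mat n :=
  Matrix.toEuclideanLin.symm ((W.subtypeL.comp (W.orthogonalProjectionOnto)).toLinearMap)

/-!
The plane `(Id + tL)(T)` is the range of `A t = (1 + tL) T`. Since `A t` kills `ker T`, adding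
`1 - T` to its Gram matrix changes nothing on `ran T` but makes it invertible for small `t`, and
`A S⁻¹ Aᵀ` with `S = Aᵀ A + (1 - T)` is then a symmetric idempotent with the same range as `A`,
i.e. the orthogonal projection onto the moved plane. At `t = 0` we have `A = T` and `S = 1`, so
the product rule and `(S⁻¹)' = -S⁻¹ S' S⁻¹` give the derivative directly; the tangency conditions
are block identities with respect to `ran T ⊕ ker T`.
-/

namespace Matrix

variable {R : Type*} [CommRing R] {ι : Type*} [Fintype ι] [DecidableEq ι]

def gramCompletion (T A : Matrix ι ι R) : Matrix ι ι R := Aᵀ * A + (1 - T)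

def rangeProj (T A : Matrix ι ι R) : Matrix ι ι R := A * (gramCompletion T A)⁻¹ * Aᵀ

/-- For an orthogonal projection `T`, the tangent space of the Grassmannian at `T` is cut out by
`Vᵀ = V`, `T V T = 0`, `(1 - T) V (1 - T) = 0`, and consists exactly of the `symmOffDiag T X`. -/
def symmOffDiag (T X : Matrix ι ι R) : Matrix ι ι R := (1 - T) * X * T + ((1 - T) * X * T)ᵀ

variable {T A : Matrix ι ι R}

theorem gramCompletion_self (hT : IsIdempotentElem T) (hTt : Tᵀ = T) :
    gramCompletion T T = 1 := by
  rw [gramCompletion, hTt, hT.eq, add_sub_cancel]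

theorem rangeProj_transpose (hT : Tᵀ = T) : (rangeProj T A)ᵀ = rangeProj T A := by
  simp only [rangeProj, gramCompletion, transpose_mul, transpose_nonsing_inv, transpose_add,
    transpose_sub, transpose_one, transpose_transpose, hT, Matrix.mul_assoc]

theorem rangeProj_mul_of_mul_eq (hT : IsIdempotentElem T) (hA : A * T = A)
    (hS : IsUnit (gramCompletion T A).det) : rangeProj T A * A = A := by
  have hAT : A * (1 - T) = 0 := by rw [Matrix.mul_sub, hA, mul_one, sub_self]
  have hS1 : gramCompletion T A * (1 - T) = 1 - T := by
    rw [gramCompletion, Matrix.add_mul, Matrix.mul_assoc, hAT, Matrix.mul_zero, zero_add,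
      hT.one_sub.eq]
  have hS1' : (gramCompletion T A)⁻¹ * (1 - T) = 1 - T := by
    rw [← hS1, ← Matrix.mul_assoc, nonsing_inv_mul _ hS, one_mul, hS1]
  calc rangeProj T A * A = A * ((gramCompletion T A)⁻¹ * (gramCompletion T A - (1 - T))) := by
        simp only [rangeProj, gramCompletion, add_sub_cancel_right, Matrix.mul_assoc]
    _ = A := by
        rw [Matrix.mul_sub, nonsing_inv_mul _ hS, hS1', Matrix.mul_sub, hAT, mul_one, sub_zero]

theorem isIdempotentElem_rangeProj (hT : IsIdempotentElem T) (hA : A * T = A)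
    (hS : IsUnit (gramCompletion T A).det) : IsIdempotentElem (rangeProj T A) := by
  rw [IsIdempotentElem]
  nth_rw 2 [rangeProj]
  rw [← Matrix.mul_assoc, ← Matrix.mul_assoc, rangeProj_mul_of_mul_eq hT hA hS, rangeProj]

theorem symmOffDiag_transpose (X : Matrix ι ι R) : (symmOffDiag T X)ᵀ = symmOffDiag T X := by
  rw [symmOffDiag, transpose_add, transpose_transpose, add_comm]

theorem symmOffDiag_eq (hTt : Tᵀ = T) (X : Matrix ι ι R) :
    symmOffDiag T X = (1 - T) * X * T + T * Xᵀ * (1 - T) := by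
  simp only [symmOffDiag, transpose_mul, transpose_sub, transpose_one, hTt, Matrix.mul_assoc]

theorem mul_symmOffDiag_mul_self (hT : IsIdempotentElem T) (hTt : Tᵀ = T)
    (X : Matrix ι ι R) : T * symmOffDiag T X * T = 0 := by
  have hT' (Y : Matrix ι ι R) : T * ((1 - T) * Y) = 0 := by
    rw [← Matrix.mul_assoc, hT.mul_one_sub_self, Matrix.zero_mul]
  simp only [symmOffDiag_eq hTt, Matrix.mul_add, Matrix.add_mul, Matrix.mul_assoc, hT',
    hT.one_sub_mul_self, Matrix.mul_zero, Matrix.zero_mul, add_zero]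

theorem one_sub_mul_symmOffDiag_mul_one_sub (hT : IsIdempotentElem T) (hTt : Tᵀ = T)
    (X : Matrix ι ι R) : (1 - T) * symmOffDiag T X * (1 - T) = 0 := by
  have hT' (Y : Matrix ι ι R) : (1 - T) * (T * Y) = 0 := by
    rw [← Matrix.mul_assoc, hT.one_sub_mul_self, Matrix.zero_mul]
  simp only [symmOffDiag_eq hTt, Matrix.mul_add, Matrix.mul_assoc, hT',
    hT.mul_one_sub_self, Matrix.mul_zero, add_zero]

end Matrix

section MatrixCalculus

variable {𝕜 : Type*} [NontriviallyNormedField 𝕜] {l m p : Type*} {x : 𝕜}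

theorem hasDerivAt_matrix_iff [Fintype p] {f : 𝕜 → Matrix m p 𝕜} {f' : Matrix m p 𝕜} :
    HasDerivAt f f' x ↔ ∀ i j, HasDerivAt (fun t => f t i j) (f' i j) x :=
  hasDerivAt_pi.trans (forall_congr' fun _ => hasDerivAt_pi)

theorem HasDerivAt.matrix_mul [Fintype m] [Fintype p] {f : 𝕜 → Matrix l m 𝕜}
    {g : 𝕜 → Matrix m p 𝕜} {f' : Matrix l m 𝕜} {g' : Matrix m p 𝕜} (hf : HasDerivAt f f' x)
    (hg : HasDerivAt g g' x) : HasDerivAt (fun t => f t * g t) (f' * g x + f x * g') x := by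
  rw [hasDerivAt_matrix_iff] at *
  intro i j
  simp only [Matrix.mul_apply, Matrix.add_apply, ← Finset.sum_add_distrib]
  exact HasDerivAt.fun_sum fun k _ => (hf i k).mul (hg k j)

theorem HasDerivAt.matrix_transpose [Fintype m] [Fintype p] {f : 𝕜 → Matrix m p 𝕜}
    {f' : Matrix m p 𝕜} (hf : HasDerivAt f f' x) : HasDerivAt (fun t => (f t)ᵀ) f'ᵀ x :=
  hasDerivAt_matrix_iff.2 fun i j => hasDerivAt_matrix_iff.1 hf j i

theorem HasDerivAt.matrix_inv [Fintype m] [DecidableEq m] {f : 𝕜 → Matrix m m 𝕜}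
    {f' : Matrix m m 𝕜} (hf : HasDerivAt f f' x) (hx : IsUnit (f x).det) :
    HasDerivAt (fun t => (f t)⁻¹) (-((f x)⁻¹ * f' * (f x)⁻¹)) x := by
  have hdet : ContinuousAt (fun t => (f t).det) x :=
    continuous_id.matrix_det.continuousAt.comp hf.continuousAt
  have hunit : ∀ᶠ t in 𝓝 x, IsUnit (f t).det :=
    (hdet.eventually_ne hx.ne_zero).mono fun _ => isUnit_iff_ne_zero.2
  have hinv : Tendsto (fun t => (f t)⁻¹) (𝓝 x) (𝓝 (f x)⁻¹) := by
    refine (continuousAt_matrix_inv _ ?_).tendsto.comp hf.continuousAt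
    rw [Ring.inverse_eq_inv']
    exact continuousAt_inv₀ hx.ne_zero
  have hslope := hasDerivAt_iff_tendsto_slope.1 hf
  refine hasDerivAt_iff_tendsto_slope.2 <|
    (((hinv.mono_left nhdsWithin_le_nhds).mul hslope).mul_const _).neg.congr' ?_
  filter_upwards [nhdsWithin_le_nhds hunit] with t ht
  rw [slope_def_module, slope_def_module,
    Matrix.inv_sub_inv (by simp only [Matrix.isUnit_iff_isUnit_det, ht, hx]), ← neg_sub (f t),
    Matrix.mul_neg, Matrix.neg_mul, Matrix.mul_smul, Matrix.smul_mul, smul_neg]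

end MatrixCalculus

section RangeProjCalculus

open Matrix

variable {𝕜 : Type*} [NontriviallyNormedField 𝕜] {ι : Type*} [Fintype ι] [DecidableEq ι]
  {T : Matrix ι ι 𝕜} {A : 𝕜 → Matrix ι ι 𝕜} {x : 𝕜}

theorem eventually_isUnit_det_gramCompletion (hT : IsIdempotentElem T) (hTt : Tᵀ = T)
    (hA : ContinuousAt A x) (hAx : A x = T) :
    ∀ᶠ t in 𝓝 x, IsUnit (gramCompletion T (A t)).det := by
  have hcont : ContinuousAt (fun t => (gramCompletion T (A t)).det) x :=
    (((continuous_id.matrix_transpose.matrix_mul continuous_id).add continuous_const).matrix_det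
      |>.continuousAt).comp (f := A) hA
  have h1 : (gramCompletion T (A x)).det ≠ 0 := by
    rw [hAx, gramCompletion_self hT hTt, det_one]
    exact one_ne_zero
  exact (hcont.eventually_ne h1).mono fun _ => isUnit_iff_ne_zero.2

theorem hasDerivAt_rangeProj (hT : IsIdempotentElem T) (hTt : Tᵀ = T) {A' : Matrix ι ι 𝕜}
    (hA : HasDerivAt A A' x) (hAx : A x = T) :
    HasDerivAt (fun t => rangeProj T (A t)) (symmOffDiag T A') x := by
  have hSx : gramCompletion T (A x) = 1 := by rw [hAx, gramCompletion_self hT hTt]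
  have hS : HasDerivAt (fun t => gramCompletion T (A t)) (A'ᵀ * A x + (A x)ᵀ * A') x :=
    (hA.matrix_transpose.matrix_mul hA).add_const (1 - T)
  have hSinv := hS.matrix_inv (by rw [hSx, det_one]; exact isUnit_one)
  refine ((hA.matrix_mul hSinv).matrix_mul hA.matrix_transpose).congr_deriv ?_
  have hT' (Y : Matrix ι ι 𝕜) : T * (T * Y) = T * Y := by rw [← Matrix.mul_assoc, hT.eq]
  rw [hSx, hAx, inv_one]
  simp only [symmOffDiag_eq hTt, hTt, Matrix.mul_one, Matrix.one_mul,
    Matrix.mul_neg, Matrix.mul_add, Matrix.add_mul, Matrix.mul_sub, Matrix.sub_mul,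
    Matrix.neg_mul, Matrix.mul_assoc, hT.eq, hT']
  abel

end RangeProjCalculus

section Projection

open Matrix

variable {n : ℕ}

theorem projMat_range_toEuclideanLin {P : Mat n} (hP : IsIdempotentElem P) (hPt : Pᵀ = P) :
    projMat (LinearMap.range (toEuclideanLin P)) = P := by
  have hsymm : (toEuclideanLin P).IsSymmetricProjection :=
    ⟨by rw [IsIdempotentElem, Module.End.mul_eq_comp, ← toLpLin_mul_same, hP.eq],
      isSymmetric_toEuclideanLin_iff.mpr <| by
        rw [IsHermitian, conjTranspose_eq_transpose_of_trivial, hPt]⟩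
  obtain ⟨_, hP_eq⟩ := LinearMap.isSymmetricProjection_iff_eq_coe_starProjection_range.mp hsymm
  exact toEuclideanLin.symm_apply_eq.mpr hP_eq.symm

theorem range_toEuclideanLin_rangeProj {T A : Mat n} (hT : IsIdempotentElem T) (hA : A * T = A)
    (hS : IsUnit (gramCompletion T A).det) :
    LinearMap.range (toEuclideanLin (rangeProj T A)) = LinearMap.range (toEuclideanLin A) := by
  apply le_antisymm
  · rw [rangeProj, Matrix.mul_assoc, toLpLin_mul_same]
    exact LinearMap.range_comp_le_range _ _
  · conv_lhs => rw [← rangeProj_mul_of_mul_eq hT hA hS, toLpLin_mul_same]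
    exact LinearMap.range_comp_le_range _ _

theorem projMat_range_toEuclideanLin_eq_rangeProj {T A : Mat n} (hT : IsIdempotentElem T)
    (hTt : Tᵀ = T) (hA : A * T = A) (hS : IsUnit (gramCompletion T A).det) :
    projMat (LinearMap.range (toEuclideanLin A)) = rangeProj T A := by
  rw [← range_toEuclideanLin_rangeProj hT hA hS,
    projMat_range_toEuclideanLin (isIdempotentElem_rangeProj hT hA hS) (rangeProj_transpose hTt)]

end Projection

/-- **Lemma A.1.** For `T ∈ G(n,d)` and `L ∈ ℝⁿ⊗ℝⁿ`, letting `T(t)` be the orthogonal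
projection onto the `d`-plane `(Id + tL)(T)`, the map `t ↦ T(t)` is differentiable at
`0` with `T'(0) = T^⊥ L T + (T^⊥ L T)ᵀ`, which belongs to `Tan_T G(n,d)`. -/
theorem statement12 (n d : ℕ) (T : Mat n) (hT : T ∈ grassSet n d) (L : Mat n) :
    HasDerivAt
      (fun t : ℝ => projMat (Submodule.map
        ((Matrix.toEuclideanLin (1 + t • L)) : E n →ₗ[ℝ] E n)
        (LinearMap.range ((Matrix.toEuclideanLin T) : E n →ₗ[ℝ] E n))))
      ((1 - T) * L * T + ((1 - T) * L * T)ᵀ) 0 ∧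
    ((1 - T) * L * T + ((1 - T) * L * T)ᵀ)ᵀ = (1 - T) * L * T + ((1 - T) * L * T)ᵀ ∧
    T * ((1 - T) * L * T + ((1 - T) * L * T)ᵀ) * T = 0 ∧
    (1 - T) * ((1 - T) * L * T + ((1 - T) * L * T)ᵀ) * (1 - T) = 0 := by
  obtain ⟨hT, hTt, -⟩ : IsIdempotentElem T ∧ Tᵀ = T ∧ _ := hT
  set A : ℝ → Mat n := fun t => (1 + t • L) * T
  have hA : HasDerivAt A (L * T) 0 := by
    simpa using ((((hasDerivAt_id (0 : ℝ)).smul_const L).const_add 1).matrix_mul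
      (hasDerivAt_const (0 : ℝ) T))
  have hA0 : A 0 = T := by simp [A]
  have hV : Matrix.symmOffDiag T (L * T) = (1 - T) * L * T + ((1 - T) * L * T)ᵀ := by
    rw [Matrix.symmOffDiag, ← Matrix.mul_assoc, Matrix.mul_assoc _ T, hT.eq]
  refine ⟨?_, hV ▸ Matrix.symmOffDiag_transpose _, hV ▸ Matrix.mul_symmOffDiag_mul_self hT hTt _,
    hV ▸ Matrix.one_sub_mul_symmOffDiag_mul_one_sub hT hTt _⟩
  refine hV ▸ (hasDerivAt_rangeProj hT hTt hA hA0).congr_of_eventuallyEq ?_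
  filter_upwards [eventually_isUnit_det_gramCompletion hT hTt hA.continuousAt hA0] with t ht
  rw [← LinearMap.range_comp, ← Matrix.toLpLin_mul_same]
  exact projMat_range_toEuclideanLin_eq_rangeProj hT hTt (by rw [Matrix.mul_assoc, hT.eq]) ht
end
end

section
/- The area integrand satisfies the atomic condition: for every Borel probability measure μ on G(n,d), the matrix A(μ) := ∫_{G(n,d)} T dμ(T) (with T the orthogonal projection matrix onto the d-plane T) is symmetric positive semidefinite with trace d and satisfies dim Ker A(μ) ≤ n−d; moreover, if dim Ker A(μ) = n−d, then μ = δ_{T_0} for a single d-plane T_0 ∈ G(n,d). -/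
open MeasureTheory Filter Metric Set Topology ENNReal ProbabilityTheory
open scoped Matrix
open scoped RealInnerProductSpace

noncomputable section

attribute [local instance] Matrix.normedAddCommGroup Matrix.normedSpace

/-!
`A = ∫ T dμ` lies in the closed convex set `{0 ≤ A ≤ 1, tr A = d}` containing `G(n,d)`, so
its eigenvalues lie in `[0,1]` and sum to `d`; hence `rank A ≥ d`, with equality only if every
eigenvalue is `0` or `1`, i.e. `A ∈ G(n,d)`. In that case `2 (d - tr (T A)) = |T - A|²` on
`G(n,d)`, while `∫ tr (T A) dμ = tr (A²) = d`; so `T = A` for `μ`-a.e. `T`.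
-/

open Matrix Finset

section Projection

variable {ι : Type*} [Fintype ι] {P Q : Matrix ι ι ℝ}

lemma proj_apply_self_eq_sum_sq (hP : P * P = P) (hPt : Pᵀ = P) (i : ι) :
    P i i = ∑ k, P k i ^ 2 := by
  calc P i i = (Pᵀ * P) i i := by rw [hPt, hP]
    _ = ∑ k, P k i ^ 2 := by simp only [mul_apply, transpose_apply, sq]

lemma abs_proj_apply_le_one (hP : P * P = P) (hPt : Pᵀ = P) (i j : ι) : |P i j| ≤ 1 := by
  have hsq : ∀ k, P k j ^ 2 ≤ P j j := fun k => by
    rw [proj_apply_self_eq_sum_sq hP hPt j]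
    exact single_le_sum (fun k _ => sq_nonneg (P k j)) (mem_univ k)
  have hdiag : P j j ≤ 1 := by nlinarith [hsq j]
  rw [← sq_le_one_iff_abs_le_one]
  exact (hsq i).trans hdiag

lemma posSemidef_of_proj (hP : P * P = P) (hPt : Pᵀ = P) : P.PosSemidef := by
  have h : Pᴴ * P = P := by rw [conjTranspose_eq_transpose_of_trivial, hPt, hP]
  exact h ▸ posSemidef_conjTranspose_mul_self P

lemma trace_transpose_mul_sub_proj (hP : P * P = P) (hPt : Pᵀ = P) (hQ : Q * Q = Q)
    (hQt : Qᵀ = Q) :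
    ((P - Q)ᵀ * (P - Q)).trace = P.trace + Q.trace - 2 * (P * Q).trace := by
  rw [transpose_sub, hPt, hQt, sub_mul, mul_sub, mul_sub, hP, hQ, trace_sub, trace_sub,
    trace_sub, trace_mul_comm Q P]
  ring

variable [DecidableEq ι]

lemma one_sub_proj_posSemidef (hP : P * P = P) (hPt : Pᵀ = P) : (1 - P).PosSemidef := by
  refine posSemidef_of_proj ?_ (by rw [transpose_sub, transpose_one, hPt])
  rw [sub_mul, one_mul, mul_sub, mul_one, hP, sub_self, sub_zero]

end Projection

lemma isClosed_setOf_posSemidef {ι : Type*} [Fintype ι] :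
    IsClosed {A : Matrix ι ι ℝ | A.PosSemidef} := by
  simp only [posSemidef_iff_dotProduct_mulVec, Set.ofPred_and, Set.ofPred_forall]
  exact (isClosed_eq continuous_id.matrix_conjTranspose continuous_id).inter <|
    isClosed_iInter fun x => isClosed_le continuous_const
      (continuous_const.dotProduct (continuous_id.matrix_mulVec continuous_const))

section Fantope

variable (ι : Type*) [Fintype ι] [DecidableEq ι]

-- The Fantope: for integral `d`, the convex hull of the rank-`d` orthogonal projections.
def fantope (d : ℝ) : Set (Matrix ι ι ℝ) :=
  {A | A.PosSemidef ∧ (1 - A).PosSemidef ∧ A.trace = d}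

variable {ι}

lemma convex_fantope (d : ℝ) : Convex ℝ (fantope ι d) := by
  rintro A ⟨hA, hA', hAd⟩ B ⟨hB, hB', hBd⟩ a b ha hb hab
  refine ⟨(hA.smul ha).add (hB.smul hb), ?_, ?_⟩
  · have : 1 - (a • A + b • B) = a • (1 - A) + b • (1 - B) := by
      obtain rfl : b = 1 - a := by linarith
      module
    rw [this]
    exact (hA'.smul ha).add (hB'.smul hb)
  · rw [trace_add, trace_smul, trace_smul, hAd, hBd, smul_eq_mul, smul_eq_mul, ← add_mul, hab,
      one_mul]

lemma isClosed_fantope (d : ℝ) : IsClosed (fantope ι d) :=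
  isClosed_setOf_posSemidef.inter <|
    (isClosed_setOf_posSemidef.preimage (continuous_const.sub continuous_id)).inter <|
      isClosed_eq continuous_id.matrix_trace continuous_const

end Fantope

lemma sum_le_card_filter_ne_zero {ι : Type*} [Fintype ι] {f : ι → ℝ}
    (hf : ∀ i, f i ≤ 1) : ∑ i, f i ≤ #{i | f i ≠ 0} := by
  rw [← sum_filter_ne_zero, card_eq_sum_ones, Nat.cast_sum, Nat.cast_one]
  exact sum_le_sum fun i _ => hf i

lemma eq_zero_or_eq_one_of_sum_eq_card_filter_ne_zero {ι : Type*} [Fintype ι] {f : ι → ℝ}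
    (hf : ∀ i, f i ≤ 1) (heq : ∑ i, f i = #{i | f i ≠ 0}) (i : ι) :
    f i = 0 ∨ f i = 1 := by
  rw [or_iff_not_imp_left]
  intro hi
  rw [← sum_filter_ne_zero, card_eq_sum_ones, Nat.cast_sum, Nat.cast_one] at heq
  exact (sum_eq_sum_iff_of_le fun j _ => hf j).mp heq i (by simpa using hi)

namespace Matrix.IsHermitian

variable {ι : Type*} [Fintype ι] [DecidableEq ι] {A : Matrix ι ι ℝ}

lemma eigenvalues_le_one (hA : A.IsHermitian) (h : (1 - A).PosSemidef) (i : ι) :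
    hA.eigenvalues i ≤ 1 := by
  set v := ⇑(hA.eigenvectorBasis i)
  have hv : star v ⬝ᵥ v = 1 := by
    rw [dotProduct_comm, ← EuclideanSpace.inner_eq_star_dotProduct,
      real_inner_self_eq_norm_sq, hA.eigenvectorBasis.orthonormal.1 i, one_pow]
  have := h.dotProduct_mulVec_nonneg v
  rw [sub_mulVec, one_mulVec, dotProduct_sub, hv, sub_nonneg] at this
  simpa [hA.eigenvalues_eq i] using this

lemma trace_le_rank (hA : A.IsHermitian) (h : (1 - A).PosSemidef) : A.trace ≤ A.rank := by
  rw [hA.trace_eq_sum_eigenvalues, hA.rank_eq_card_non_zero_eigs, Fintype.card_subtype]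
  exact sum_le_card_filter_ne_zero (hA.eigenvalues_le_one h)

lemma mul_self_eq_of_trace_eq_rank (hA : A.IsHermitian) (h : (1 - A).PosSemidef)
    (heq : A.trace = A.rank) : A * A = A := by
  rw [hA.trace_eq_sum_eigenvalues, hA.rank_eq_card_non_zero_eigs, Fintype.card_subtype] at heq
  have h01 := eq_zero_or_eq_one_of_sum_eq_card_filter_ne_zero (hA.eigenvalues_le_one h)
    (by simpa using heq)
  refine (isIdempotentElem_iff_spectrum_subset ℝ A hA).mpr ?_
  rw [hA.spectrum_real_eq_range_eigenvalues]
  rintro _ ⟨i, rfl⟩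
  exact h01 i

end Matrix.IsHermitian

lemma kerDim_add_rank {n : ℕ} (A : Mat n) : kerDim A + A.rank = n := by
  rw [kerDim, rank_eq_finrank_range_toLin A (PiLp.basisFun 2 ℝ (Fin n))
    (PiLp.basisFun 2 ℝ (Fin n)), ← toLpLin_eq_toLin, add_comm,
    LinearMap.finrank_range_add_finrank_ker, finrank_euclideanSpace_fin]

lemma MeasureTheory.Measure.eq_dirac_of_ae_eq {α : Type*} [MeasurableSpace α] {μ : Measure α}
    [IsProbabilityMeasure μ] {a : α} (h : ∀ᵐ x ∂μ, x = a) : μ = Measure.dirac a := by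
  calc μ = μ.map id := Measure.map_id.symm
    _ = μ.map fun _ => a := Measure.map_congr h
    _ = Measure.dirac a := by rw [Measure.map_const, measure_univ, one_smul]

section GrassmannianMeasures

variable {n d : ℕ} {μ : Measure (Mat n)}

-- The norm on `Mat n` is a local instance whose topology is not reducibly that of `Matrix`,
-- so these two instances are not found by instance search.
instance : ContinuousENorm (Mat n) := SeminormedAddGroup.toContinuousENorm

instance : @OpensMeasurableSpace (Mat n) (PseudoMetricSpace.toUniformSpace).toTopologicalSpace _ :=
  inferInstanceAs (OpensMeasurableSpace (Fin n → Fin n → ℝ))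

lemma measurableSet_grassSet : MeasurableSet (grassSet n d) :=
  ((isClosed_eq (continuous_id.matrix_mul continuous_id) continuous_id).inter <|
    (isClosed_eq continuous_id.matrix_transpose continuous_id).inter <|
      isClosed_eq continuous_id.matrix_trace continuous_const).measurableSet

lemma ae_mem_grassSet [IsProbabilityMeasure μ] (hμ : μ (grassSet n d) = 1) :
    ∀ᵐ T ∂μ, T ∈ grassSet n d :=
  (ae_iff_measure_eq measurableSet_grassSet.nullMeasurableSet).mpr <| by
    rw [measure_univ]; exact hμ

lemma integrable_id_of_ae_mem_grassSet [IsFiniteMeasure μ]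
    (hG : ∀ᵐ T ∂μ, T ∈ grassSet n d) : Integrable (fun T => T) μ := by
  refine Integrable.of_bound (by fun_prop) 1 ?_
  filter_upwards [hG] with T hT
  exact (Matrix.norm_le_iff zero_le_one).mpr fun i j => abs_proj_apply_le_one hT.1 hT.2.1 i j

lemma integral_mem_fantope [IsProbabilityMeasure μ] (hG : ∀ᵐ T ∂μ, T ∈ grassSet n d) :
    ∫ T, T ∂μ ∈ fantope (Fin n) d := by
  refine (convex_fantope _).integral_mem (isClosed_fantope _) ?_
    (integrable_id_of_ae_mem_grassSet hG)
  filter_upwards [hG] with T ⟨hT, hTt, hTd⟩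
  exact ⟨posSemidef_of_proj hT hTt, one_sub_proj_posSemidef hT hTt, hTd⟩

lemma ae_eq_integral_of_integral_mem_grassSet [IsProbabilityMeasure μ]
    (hG : ∀ᵐ T ∂μ, T ∈ grassSet n d) (hA : ∫ T, T ∂μ ∈ grassSet n d) :
    ∀ᵐ T ∂μ, T = ∫ T, T ∂μ := by
  set A := ∫ T, T ∂μ
  obtain ⟨hAA, hAt, hAd⟩ := hA
  let f : Mat n →L[ℝ] ℝ := LinearMap.toContinuousLinearMap
    ((Matrix.traceLinearMap (Fin n) ℝ ℝ).comp (LinearMap.mulRight ℝ A))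
  have hf : ∀ T, f T = (T * A).trace := fun T => rfl
  have hint := integrable_id_of_ae_mem_grassSet hG
  have hfint : Integrable (fun T => f T) μ := f.integrable_comp hint
  have hfA : ∫ T, f T ∂μ = f A := f.integral_comp_comm hint
  have hdist : ∀ᵐ T ∂μ, 2 * (d - f T) = ((T - A)ᵀ * (T - A)).trace := by
    filter_upwards [hG] with T ⟨hT, hTt, hTd⟩
    rw [trace_transpose_mul_sub_proj hT hTt hAA hAt, hTd, hAd, hf]
    ring
  have hzero : ∫ T, (d - f T) ∂μ = 0 := by
    rw [integral_sub (integrable_const _) hfint, integral_const, hfA, hf, hAA, hAd]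
    simp
  have hnonneg : 0 ≤ᵐ[μ] fun T => d - f T := by
    filter_upwards [hdist] with T hT
    have := (posSemidef_conjTranspose_mul_self (T - A)).trace_nonneg
    rw [conjTranspose_eq_transpose_of_trivial, ← hT] at this
    simpa using this
  have := (integral_eq_zero_iff_of_nonneg_ae hnonneg
    ((integrable_const _).sub hfint)).mp hzero
  filter_upwards [this, hdist] with T hT hTd
  rw [Pi.zero_apply] at hT
  rw [hT, mul_zero, eq_comm, ← conjTranspose_eq_transpose_of_trivial,
    trace_conjTranspose_mul_self_eq_zero_iff, sub_eq_zero] at hTd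
  exact hTd

end GrassmannianMeasures

theorem statement15_general (n d : ℕ) (μ : Measure (Mat n))
    [IsProbabilityMeasure μ] (hμ : μ (grassSet n d) = 1) :
    (∫ T, T ∂μ)ᵀ = (∫ T, T ∂μ) ∧
    Matrix.PosSemidef (∫ T, T ∂μ) ∧
    (∫ T, T ∂μ).trace = (d : ℝ) ∧
    kerDim (∫ T, T ∂μ) ≤ n - d ∧
    (kerDim (∫ T, T ∂μ) = n - d → ∃ T₀ ∈ grassSet n d, μ = Measure.dirac T₀) := by
  have hG := ae_mem_grassSet hμ
  obtain ⟨hpsd, hle, htr⟩ := integral_mem_fantope hG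
  set A := ∫ T, T ∂μ
  have hsymm : Aᵀ = A := by rw [← conjTranspose_eq_transpose_of_trivial, hpsd.isHermitian.eq]
  have hrank : d ≤ A.rank := by exact_mod_cast htr ▸ hpsd.isHermitian.trace_le_rank hle
  have hker := kerDim_add_rank A
  refine ⟨hsymm, hpsd, htr, by omega, fun hk => ?_⟩
  have hproj : A * A = A :=
    hpsd.isHermitian.mul_self_eq_of_trace_eq_rank hle (by rw [htr]; congr 1; omega)
  have hA : A ∈ grassSet n d := ⟨hproj, hsymm, htr⟩
  exact ⟨A, hA, Measure.eq_dirac_of_ae_eq (ae_eq_integral_of_integral_mem_grassSet hG hA)⟩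

/-- The area integrand `F ≡ 1` satisfies the atomic condition: for every Borel
probability measure `μ` on `G(n,d)`, the matrix `A(μ) = ∫ T dμ(T)` is symmetric
positive semidefinite with trace `d` and `dim Ker A(μ) ≤ n − d`; if
`dim Ker A(μ) = n − d` then `μ` is a Dirac delta at a single `d`-plane. -/
theorem statement15 (n d : ℕ) (hdn : d ≤ n) (μ : Measure (Mat n))
    [IsProbabilityMeasure μ] (hμ : μ (grassSet n d) = 1) :
    (∫ T, T ∂μ)ᵀ = (∫ T, T ∂μ) ∧
    Matrix.PosSemidef (∫ T, T ∂μ) ∧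
    (∫ T, T ∂μ).trace = (d : ℝ) ∧
    kerDim (∫ T, T ∂μ) ≤ n - d ∧
    (kerDim (∫ T, T ∂μ) = n - d → ∃ T₀ ∈ grassSet n d, μ = Measure.dirac T₀) :=
  statement15_general n d μ hμ
end
end

section
/- Let n ≥ 2 and let G ∈ C^1(ℝ^n \ {0}) be even, positively one-homogeneous, and strictly positive on the unit sphere. If G(ν)G(ν̄) − ⟨dG(ν̄), ν⟩⟨dG(ν), ν̄⟩ ≠ 0 for all ν, ν̄ ∈ S^{n−1} with ν ≠ ±ν̄, then in fact G(ν)G(ν̄) − ⟨dG(ν̄), ν⟩⟨dG(ν), ν̄⟩ > 0 for all such pairs, and consequently G(ν) > ⟨dG(ν̄), ν⟩ for all ν, ν̄ ∈ S^{n−1} with ν ≠ ±ν̄ (i.e. G is strictly convex). -/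
open MeasureTheory Filter Metric Set Topology ENNReal ProbabilityTheory
open scoped Matrix
open scoped RealInnerProductSpace

noncomputable section

attribute [local instance] Matrix.normedAddCommGroup Matrix.normedSpace

/-- **Theorem 1.4, Step 2** (connectedness argument). Let `G ∈ C¹(ℝⁿ \ {0})` be even,
positively one-homogeneous and positive on the sphere. If
`G(ν)G(ν̄) − ⟨dG(ν̄),ν⟩⟨dG(ν),ν̄⟩ ≠ 0` for all unit vectors `ν ≠ ±ν̄`, then this
quantity is in fact positive for all such pairs, and consequently `G(ν) > ⟨dG(ν̄),ν⟩`
for all unit `ν ≠ ±ν̄`, i.e. `G` is strictly convex. -/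
theorem statement16 (n : ℕ) (hn : 2 ≤ n) (G : E n → ℝ)
    (hG : ContDiffOn ℝ 1 G {(0 : E n)}ᶜ)
    (heven : ∀ v : E n, G (-v) = G v)
    (hhom : ∀ c : ℝ, 0 < c → ∀ v : E n, G (c • v) = c * G v)
    (hpos : ∀ ν : E n, ‖ν‖ = 1 → 0 < G ν)
    (hne : ∀ ν νb : E n, ‖ν‖ = 1 → ‖νb‖ = 1 → ν ≠ νb → ν ≠ -νb →
      G ν * G νb - fderiv ℝ G νb ν * fderiv ℝ G ν νb ≠ 0) :
    ∀ ν νb : E n, ‖ν‖ = 1 → ‖νb‖ = 1 → ν ≠ νb → ν ≠ -νb →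
      0 < G ν * G νb - fderiv ℝ G νb ν * fderiv ℝ G ν νb ∧
      fderiv ℝ G νb ν < G ν := by
  classical
  -- basic facts
  have hopen : IsOpen ({(0:E n)}ᶜ) := isOpen_compl_singleton
  have hdiff : ∀ v : E n, v ≠ 0 → DifferentiableAt ℝ G v := fun v hv =>
    (hG.contDiffAt (hopen.mem_nhds hv)).differentiableAt one_ne_zero
  have hGpos : ∀ v : E n, v ≠ 0 → 0 < G v := by
    intro v hv
    have hc : (0:ℝ) < ‖v‖ := norm_pos_iff.2 hv
    have hu : ‖(‖v‖⁻¹ • v)‖ = 1 := by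
      rw [norm_smul, Real.norm_eq_abs, abs_of_pos (inv_pos.2 hc)]
      field_simp
    have h1 := hpos _ hu
    have h2 := hhom (‖v‖⁻¹) (inv_pos.2 hc) v
    rw [h2] at h1
    nlinarith [inv_pos.2 hc]
  have heuler : ∀ v : E n, v ≠ 0 → fderiv ℝ G v v = G v := by
    intro v hv
    have hd : HasFDerivAt G (fderiv ℝ G v) v := (hdiff v hv).hasFDerivAt
    have hc : HasDerivAt (fun t : ℝ => t • v) v 1 := by
      simpa using (hasDerivAt_id (1:ℝ)).smul_const v
    have hd' : HasFDerivAt G (fderiv ℝ G v) ((1:ℝ) • v) := by rwa [one_smul]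
    have hcomp : HasDerivAt (fun t : ℝ => G (t • v)) (fderiv ℝ G v v) 1 :=
      hd'.comp_hasDerivAt 1 hc
    have hev : (fun t : ℝ => t * G v) =ᶠ[𝓝 (1:ℝ)] fun t => G (t • v) := by
      filter_upwards [lt_mem_nhds (zero_lt_one (α := ℝ))] with t ht
      rw [hhom t ht v]
    have h1 : HasDerivAt (fun t : ℝ => t * G v) (fderiv ℝ G v v) 1 :=
      hcomp.congr_of_eventuallyEq hev
    have h2 : HasDerivAt (fun t : ℝ => t * G v) (G v) 1 := hasDerivAt_mul_const (G v)
    exact h1.unique h2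
  have hGcont : ContinuousOn G ({(0:E n)}ᶜ) := hG.continuousOn
  have hdGcont : ContinuousOn (fderiv ℝ G) ({(0:E n)}ᶜ) :=
    hG.continuousOn_fderiv_of_isOpen hopen le_rfl
  intro ν νb hν hνb hne1 hne2
  have hνb0 : νb ≠ 0 := by intro h; rw [h] at hνb; simp at hνb
  have hν0 : ν ≠ 0 := by intro h; rw [h] at hν; simp at hν
  have hGνb : 0 < G νb := hpos νb hνb
  have hGν : 0 < G ν := hpos ν hν
  set L : E n →L[ℝ] ℝ := fderiv ℝ G νb with hL
  have hLνb : L νb = G νb := heuler νb hνb0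
  -- ν is not a multiple of νb
  have hnm : ∀ a : ℝ, ν ≠ a • νb := by
    intro a ha
    have : ‖ν‖ = ‖a • νb‖ := by rw [ha]
    rw [hν, norm_smul, hνb, Real.norm_eq_abs, mul_one] at this
    rcases (abs_eq (by norm_num : (0:ℝ) ≤ 1)).1 this.symm with h | h
    · exact hne1 (by rw [ha, h, one_smul])
    · exact hne2 (by rw [ha, h, neg_one_smul])
  constructor
  · -- Part 1: positivity via IVT along a path
    set c : ℝ := L ν / G νb with hc
    set v : ℝ → E n := fun t => ν - (t * c) • νb with hv
    have hvne : ∀ t, v t ≠ 0 := by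
      intro t h
      apply hnm (t * c)
      have h' : ν - (t * c) • νb = 0 := h
      rw [sub_eq_zero] at h'; exact h'
    have hvnorm : ∀ t, ‖v t‖ ≠ 0 := fun t => norm_ne_zero_iff.2 (hvne t)
    have hvpos : ∀ t, (0:ℝ) < ‖v t‖ := fun t => norm_pos_iff.2 (hvne t)
    set u : ℝ → E n := fun t => ‖v t‖⁻¹ • v t with hu
    have hunorm : ∀ t, ‖u t‖ = 1 := by
      intro t
      simp only [hu, norm_smul, Real.norm_eq_abs, abs_of_pos (inv_pos.2 (hvpos t))]
      exact inv_mul_cancel₀ (hvnorm t)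
    have hune : ∀ t, u t ≠ νb ∧ u t ≠ -νb := by
      intro t
      constructor
      · intro h
        apply hnm (t * c + ‖v t‖)
        have h2 : v t = ‖v t‖ • νb := by
          have := congrArg (fun w => ‖v t‖ • w) h
          simpa [hu, smul_smul, mul_inv_cancel₀ (hvnorm t)] using this
        have h3 : ν - (t*c) • νb = ‖v t‖ • νb := h2
        rw [sub_eq_iff_eq_add] at h3
        rw [h3, add_smul, add_comm]
      · intro h
        apply hnm (t * c - ‖v t‖)
        have h2 : v t = ‖v t‖ • (-νb) := by
          have := congrArg (fun w => ‖v t‖ • w) h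
          simpa [hu, smul_smul, mul_inv_cancel₀ (hvnorm t)] using this
        have h3 : ν - (t*c) • νb = -(‖v t‖ • νb) := by rwa [smul_neg] at h2
        rw [sub_eq_iff_eq_add] at h3
        rw [h3, sub_smul]
        module
    have hu0 : ∀ t, u t ≠ 0 := fun t h => by
      have := hunorm t; rw [h] at this; simp at this
    set F : ℝ → ℝ := fun t => G (u t) * G νb - L (u t) * fderiv ℝ G (u t) νb with hF
    have hFne : ∀ t, F t ≠ 0 := fun t =>
      hne (u t) νb (hunorm t) hνb (hune t).1 (fun h => (hune t).2 (by rw [h]))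
    have hv0eq : v 0 = ν := by simp [hv]
    have hu0eq : u 0 = ν := by
      simp only [hu, hv0eq, hν, inv_one, one_smul]
    have hF0 : F 0 = G ν * G νb - L ν * fderiv ℝ G ν νb := by
      simp only [hF, hu0eq]
    have hLu1 : L (u 1) = 0 := by
      have hv1 : L (v 1) = 0 := by
        have h5 : L (v 1) = L ν - (1 * c) * L νb := by
          simp only [hv, map_sub, _root_.map_smul, smul_eq_mul]
        rw [h5, hLνb, one_mul, hc]
        field_simp; ring
      have h6 : L (u 1) = ‖v 1‖⁻¹ * L (v 1) := by
        simp only [hu, _root_.map_smul, smul_eq_mul]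
      rw [h6, hv1, mul_zero]
    have hF1 : 0 < F 1 := by
      rw [hF]; simp only [hLu1, zero_mul, sub_zero]
      exact mul_pos (hGpos _ (hu0 1)) hGνb
    have hucont : Continuous u := by
      have hvc : Continuous v := by
        apply Continuous.sub continuous_const
        exact (continuous_id.mul continuous_const).smul continuous_const
      exact (hvc.norm.inv₀ hvnorm).smul hvc
    have hFcont : Continuous F := by
      have h1 : Continuous fun t => G (u t) :=
        hGcont.comp_continuous hucont (fun t => hu0 t)
      have h2 : Continuous fun t => fderiv ℝ G (u t) :=
        hdGcont.comp_continuous hucont (fun t => hu0 t)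
      have h3 : Continuous fun t => fderiv ℝ G (u t) νb := h2.clm_apply continuous_const
      have h4 : Continuous fun t => L (u t) := L.continuous.comp hucont
      exact ((h1.mul continuous_const).sub (h4.mul h3))
    by_contra hcon
    have hF0le : F 0 < 0 := by
      rcases lt_or_eq_of_le (not_lt.1 (hF0 ▸ hcon)) with h | h
      · exact h
      · exact absurd h (hFne 0)
    have : (0:ℝ) ∈ Set.Icc (F 0) (F 1) := ⟨hF0le.le, hF1.le⟩
    obtain ⟨t, _, ht⟩ := intermediate_value_Icc (zero_le_one) hFcont.continuousOn this
    exact hFne t ht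
  · -- Part 2: strict convexity inequality via maximization
    by_contra hcon
    push_neg at hcon
    -- ψ v = L v / G v ; maximize on the sphere
    set ψ : E n → ℝ := fun w => L w / G w with hψ
    have hψcont : ContinuousOn ψ ({(0:E n)}ᶜ) :=
      (L.continuous.continuousOn).div hGcont (fun w hw => (hGpos w hw).ne')
    have hsub : Metric.sphere (0:E n) 1 ⊆ {(0:E n)}ᶜ := by
      intro w hw h0
      rw [mem_sphere_zero_iff_norm] at hw
      rw [h0] at hw; simp at hw
    have hνbs : νb ∈ Metric.sphere (0:E n) 1 := by rwa [mem_sphere_zero_iff_norm]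
    obtain ⟨w₀, hw₀s, hw₀max⟩ := (isCompact_sphere (0:E n) 1).exists_isMaxOn ⟨νb, hνbs⟩
      (hψcont.mono hsub)
    have hψν : 1 ≤ ψ ν := by
      rw [hψ]
      rw [le_div_iff₀ hGν]
      simpa using hcon
    have hνs : ν ∈ Metric.sphere (0:E n) 1 := by rwa [mem_sphere_zero_iff_norm]
    have hM1 : 1 ≤ ψ w₀ := le_trans hψν (hw₀max hνs)
    -- choose a maximizer distinct from ±νb
    have hψνb : ψ νb = 1 := by show L νb / G νb = 1; rw [hLνb]; exact div_self hGνb.ne'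
    have hψnνb : ψ (-νb) = -1 := by
      rw [hψ]; simp only [map_neg, heven νb, hLνb]
      field_simp
    obtain ⟨z, hzs, hzmax, hz1, hz2⟩ :
        ∃ z, z ∈ Metric.sphere (0:E n) 1 ∧ IsMaxOn ψ (Metric.sphere (0:E n) 1) z ∧
          z ≠ νb ∧ z ≠ -νb := by
      by_cases h1 : w₀ = νb
      · -- then max value is 1, so ν is also a maximizer
        refine ⟨ν, hνs, ?_, hne1, hne2⟩
        intro w hw
        have := hw₀max hw
        rw [h1, hψνb] at this
        exact le_trans this hψν
      · refine ⟨w₀, hw₀s, hw₀max, h1, ?_⟩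
        intro h2
        have := hM1
        rw [h2, hψnνb] at this
        linarith
    have hz0 : z ≠ 0 := fun h => hsub hzs h
    have hznorm : ‖z‖ = 1 := mem_sphere_zero_iff_norm.1 hzs
    have hGz : 0 < G z := hGpos z hz0
    set M : ℝ := ψ z with hMdef
    have hMpos : 0 < M := lt_of_lt_of_le zero_lt_one (le_trans hψν (hzmax hνs))
    have hLz : L z = M * G z := by
      rw [hMdef, hψ]; field_simp
    -- φ = L - M • G has a local max at z on ℝⁿ \ {0}
    have hφmax : IsLocalMax (fun w => L w - M * G w) z := by
      have hφz : L z - M * G z = 0 := by rw [hLz]; ring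
      rw [IsLocalMax, IsMaxFilter]
      filter_upwards [hopen.mem_nhds hz0] with w hw
      have hw0 : w ≠ 0 := hw
      have hwn : (0:ℝ) < ‖w‖ := norm_pos_iff.2 hw0
      have hws : ‖w‖⁻¹ • w ∈ Metric.sphere (0:E n) 1 := by
        rw [mem_sphere_zero_iff_norm, norm_smul, Real.norm_eq_abs,
          abs_of_pos (inv_pos.2 hwn)]
        field_simp
      have h1 := hzmax hws
      have h1' : L (‖w‖⁻¹ • w) / G (‖w‖⁻¹ • w) ≤ L z / G z := h1
      have e1 : L (‖w‖⁻¹ • w) = ‖w‖⁻¹ * L w := by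
        rw [_root_.map_smul, smul_eq_mul]
      have e2 : G (‖w‖⁻¹ • w) = ‖w‖⁻¹ * G w := hhom _ (inv_pos.2 hwn) w
      rw [e1, e2, mul_div_mul_left _ _ (ne_of_gt (inv_pos.2 hwn))] at h1'
      have hGw : 0 < G w := hGpos w hw0
      rw [div_le_iff₀ hGw] at h1'
      have hM' : M = L z / G z := hMdef
      rw [← hM'] at h1'
      rw [hφz]
      linarith
    have hder : HasFDerivAt (fun w => L w - M * G w) (L - M • fderiv ℝ G z) z := by
      exact (L.hasFDerivAt).sub (((hdiff z hz0).hasFDerivAt).const_mul M)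
    have hzero := hφmax.hasFDerivAt_eq_zero hder
    have happ : ∀ w : E n, L w = M * fderiv ℝ G z w := by
      intro w
      have := congrArg (fun (A : E n →L[ℝ] ℝ) => A w) hzero
      simpa [sub_eq_zero] using this
    have h1 := happ νb
    rw [hLνb] at h1
    have h2 : fderiv ℝ G z νb = G νb / M := by
      field_simp at h1 ⊢; linarith
    have h3 := hne z νb hznorm hνb hz1 hz2
    apply h3
    rw [← hL, hLz, h2]
    field_simp
    ring


end
end
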